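/- Fix z ∈ ℂ and define g : ℂ → ℂ by g(s) := ₁F₁((1−s)/2; 1/2; z²/4) = ∑_{n=0}^∞ (((1−s)/2)_n/((1/2)_n·n!))·(z²/4)ⁿ. Then g is differentiable at s = 1 and g′(1) = −(z²/4)·₂F₂(1,1;3/2,2;z²/4). -/

import Mathlib

open scoped Real
open MeasureTheory

/-- Rising factorial (Pochhammer symbol) `(a)_n`. -/
noncomputable def poch (a : ℂ) (n : ℕ) : ℂ := (ascPochhammer ℂ n).eval a

/-- Confluent hypergeometric function `₁F₁(a;c;w)`. -/
noncomputable def oneF1 (a c w : ℂ) : ℂ :=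
  ∑' n : ℕ, poch a n * w ^ n / (poch c n * n.factorial)

/-- The hypergeometric function `₂F₂(1,1;3/2,2;w)`. -/
noncomputable def twoF2 (w : ℂ) : ℂ :=
  ∑' n : ℕ, poch 1 n * poch 1 n * w ^ n / (poch (3/2) n * poch 2 n * n.factorial)

/-- The Riemann xi function `ξ(s) = (1/2) s (s-1) π^(-s/2) Γ(s/2) ζ(s)`. -/
noncomputable def xiR (s : ℂ) : ℂ :=
  (1 / 2) * s * (s - 1) * (π : ℂ) ^ (-s / 2) * Complex.Gamma (s / 2) * riemannZeta s

/-- The Riemann Xi function `Ξ(t) = ξ(1/2 + i t)`. -/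
noncomputable def XiR (t : ℂ) : ℂ := xiR (1 / 2 + Complex.I * t)

/-- `ρ(x,z,s) = x^(1/2-s) e^(-z²/8) ₁F₁((1-s)/2; 1/2; z²/4)`. -/
noncomputable def rhoF (x : ℝ) (z s : ℂ) : ℂ :=
  (x : ℂ) ^ ((1 : ℂ) / 2 - s) * Complex.exp (-z ^ 2 / 8) *
    oneF1 ((1 - s) / 2) (1 / 2) (z ^ 2 / 4)

/-- `∇(x,z,s) = ρ(x,z,s) + ρ(x,z,1-s)`. -/
noncomputable def nablaF (x : ℝ) (z s : ℂ) : ℂ := rhoF x z s + rhoF x z (1 - s)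

/-- The digamma function `ψ(x) = Γ'(x)/Γ(x)`. -/
noncomputable def digamma (x : ℝ) : ℝ := deriv Real.Gamma x / Real.Gamma x

/-- The modified Bessel function of order zero, `K₀(x) = ∫₀^∞ e^(-x cosh u) du`. -/
noncomputable def besselK0 (x : ℝ) : ℝ := ∫ u in Set.Ioi (0 : ℝ), Real.exp (-x * Real.cosh u)

/-!
Every term of the ₁F₁ series is a polynomial in the parameter `a`, bounded by `‖w‖ⁿ / n!`
uniformly on the disc `‖a‖ < Re c`, so the series can be differentiated termwise there.
Since `(a)ₙ₊₁ = a · (a + 1)ₙ`, the derivative of `(a)ₙ₊₁` at `a = 0` is `(1)ₙ = n!`.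
The chain rule through `s ↦ (1 - s) / 2`, together with `(1/2)ₙ₊₁ = (1/2) · (3/2)ₙ` and
`(2)ₙ = (n + 1)!`, turns the resulting series into `₂F₂(1, 1; 3/2, 2; w)`.
-/

open scoped Nat

lemma poch_succ (a : ℂ) (n : ℕ) : poch a (n + 1) = a * poch (a + 1) n := by
  simp [poch, ascPochhammer_succ_left, Polynomial.eval_comp]

lemma poch_one (n : ℕ) : poch 1 n = n ! :=
  ascPochhammer_eval_one ℂ n

lemma poch_two (n : ℕ) : poch 2 n = (n + 1)! := by
  have h := poch_succ 1 n
  rw [poch_one, one_mul, one_add_one_eq_two] at h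
  exact h.symm

lemma differentiable_poch (n : ℕ) : Differentiable ℂ fun a => poch a n :=
  Polynomial.differentiable _

lemma hasDerivAt_poch_succ_zero (n : ℕ) : HasDerivAt (fun a => poch a (n + 1)) (n ! : ℂ) 0 := by
  have h : DifferentiableAt ℂ (fun a : ℂ => poch (a + 1) n) 0 :=
    (differentiable_poch n).comp (differentiable_id.add_const 1) 0
  simpa [poch_succ, poch_one] using (hasDerivAt_id' 0).fun_mul h.hasDerivAt

lemma norm_poch_le_norm_poch {a c : ℂ} (h : ‖a‖ ≤ c.re) (n : ℕ) : ‖poch a n‖ ≤ ‖poch c n‖ := by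
  induction n with
  | zero => simp [poch]
  | succ n ih =>
    simp only [poch, ascPochhammer_succ_eval, norm_mul] at ih ⊢
    refine mul_le_mul ih ?_ (norm_nonneg _) (norm_nonneg _)
    calc ‖a + n‖ ≤ ‖a‖ + n := by simpa using norm_add_le a (n : ℂ)
      _ ≤ (c + n).re := by simpa using h
      _ ≤ ‖c + n‖ := Complex.re_le_norm _

noncomputable def oneF1Term (a c w : ℂ) (n : ℕ) : ℂ := poch a n * w ^ n / (poch c n * n !)

lemma norm_oneF1Term_le {a c : ℂ} (w : ℂ) (h : ‖a‖ ≤ c.re) (n : ℕ) :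
    ‖oneF1Term a c w n‖ ≤ ‖w‖ ^ n / n ! := by
  rw [oneF1Term, norm_div, norm_mul, norm_mul, norm_pow, Complex.norm_natCast]
  have hw : 0 ≤ ‖w‖ ^ n / n ! := by positivity
  rcases (norm_nonneg (poch c n)).eq_or_lt with hc | hc
  · rwa [← hc, zero_mul, div_zero]
  · rw [mul_div_mul_comm, mul_comm]
    exact mul_le_of_le_one_right hw
      ((div_le_one hc).mpr (norm_poch_le_norm_poch h n))

lemma hasDerivAt_oneF1Term_succ (c w : ℂ) (n : ℕ) :
    HasDerivAt (fun a => oneF1Term a c w (n + 1))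
      (n ! * w ^ (n + 1) / (poch c (n + 1) * (n + 1)!)) 0 :=
  ((hasDerivAt_poch_succ_zero n).mul_const _).div_const _

lemma hasDerivAt_oneF1_zero {c : ℂ} (hc : 0 < c.re) (w : ℂ) :
    HasDerivAt (fun a => oneF1 a c w)
      (∑' n : ℕ, n ! * w ^ (n + 1) / (poch c (n + 1) * (n + 1)!)) 0 := by
  set U := Metric.ball (0 : ℂ) c.re
  have h0U : (0 : ℂ) ∈ U := Metric.mem_ball_self hc
  have hbound : ∀ n, ∀ a ∈ U, ‖oneF1Term a c w n‖ ≤ ‖w‖ ^ n / n ! := fun n a ha =>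
    norm_oneF1Term_le w (mem_ball_zero_iff.mp ha).le n
  have hdiff : ∀ n, DifferentiableOn ℂ (fun a => oneF1Term a c w n) U := fun n =>
    (((differentiable_poch n).mul_const _).div_const _).differentiableOn
  have hsum := Real.summable_pow_div_factorial ‖w‖
  have hderiv := Complex.hasSum_deriv_of_summable_norm hsum hdiff Metric.isOpen_ball hbound h0U
  have hdiffAt := (Complex.differentiableOn_tsum_of_summable_norm hsum hdiff Metric.isOpen_ball
    hbound).differentiableAt (Metric.isOpen_ball.mem_nhds h0U)
  refine hdiffAt.hasDerivAt.congr_deriv ?_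
  rw [← hderiv.tsum_eq, hderiv.summable.tsum_eq_zero_add]
  have hconst : deriv (fun a => oneF1Term a c w 0) 0 = 0 := by simp [oneF1Term, poch]
  simp only [hconst, zero_add, (hasDerivAt_oneF1Term_succ c w _).deriv]

lemma tsum_poch_half_eq_twoF2 (w : ℂ) :
    ∑' n : ℕ, n ! * w ^ (n + 1) / (poch (1 / 2) (n + 1) * (n + 1)!) = 2 * w * twoF2 w := by
  rw [twoF2, ← tsum_mul_left]
  refine tsum_congr fun n => ?_
  have hfac : (n ! : ℂ) ≠ 0 := Nat.cast_ne_zero.mpr n.factorial_ne_zero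
  rw [poch_succ, poch_one, poch_two, show (1 / 2 + 1 : ℂ) = 3 / 2 by norm_num]
  field_simp
  ring

theorem stmt16 (z : ℂ) :
    HasDerivAt (fun s : ℂ => oneF1 ((1 - s) / 2) (1 / 2) (z ^ 2 / 4))
      (-(z ^ 2 / 4) * twoF2 (z ^ 2 / 4)) 1 := by
  have hF := hasDerivAt_oneF1_zero (c := 1 / 2) (by norm_num) (z ^ 2 / 4)
  have hlin : HasDerivAt (fun s : ℂ => (1 - s) / 2) (-1 / 2) 1 := by
    simpa using ((hasDerivAt_id (1 : ℂ)).const_sub 1).div_const 2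
  refine (hF.comp_of_eq 1 hlin (by norm_num)).congr_deriv ?_
  rw [tsum_poch_half_eq_twoF2]
  ring
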